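/- arXiv:1002.2733 — 2 statements merged into one kernel-verified Lean document; each statement's English description precedes it below -/
import Mathlib

section
/- Let H be a separable complex Hilbert space, let {T(t)}_{t∈ℝ} be a weakly measurable family of densely defined closed linear operators in H, and let 𝒯 be the maximally defined operator in L²(ℝ; H). If the linear subspace 𝒟 = {f ∈ L²(ℝ; H) : f(t) ∈ dom(T(t)) for a.e. t ∈ ℝ} is dense in L²(ℝ; H), then 𝒯 is densely defined in L²(ℝ; H). -/
open MeasureTheory

noncomputable section

variable {H : Type*} [NormedAddCommGroup H] [InnerProductSpace ℂ H]

/-- A family of vectors `g : ℝ → H` is weakly (Lebesgue) measurable if `t ↦ ⟪h, g t⟫` is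
Lebesgue measurable for every `h ∈ H`. -/
def WeakMeasVec (g : ℝ → H) : Prop :=
  ∀ h : H, AEMeasurable (fun t : ℝ => (inner ℂ h (g t) : ℂ)) volume

/-- A family of bounded operators `A : ℝ → B(H)` is weakly measurable. -/
def WeakMeasOp (A : ℝ → H →L[ℂ] H) : Prop :=
  ∀ h k : H, AEMeasurable (fun t : ℝ => (inner ℂ h (A t k) : ℂ)) volume

/-- A family of (in general unbounded) linear operators in `H` is weakly measurable if it
maps weakly measurable families of vectors in the domains to weakly measurable families. -/
def WeakMeasFam (T : ℝ → (H →ₗ.[ℂ] H)) : Prop :=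
  ∀ f : (t : ℝ) → (T t).domain,
    WeakMeasVec (fun t => (f t : H)) → WeakMeasVec (fun t => T t (f t))

/-- `P` is the characteristic matrix of `T`: the `2 × 2` block operator matrix of the
orthogonal projection of `H ⊕ H` onto the graph of `T`. -/
def IsCharMatrix (T : H →ₗ.[ℂ] H) (P : Fin 2 → Fin 2 → (H →L[ℂ] H)) : Prop :=
  (∀ x y : H, (P 0 0 x + P 0 1 y, P 1 0 x + P 1 1 y) ∈ T.graph) ∧
  (∀ x y : H, ∀ u : T.domain,
    (inner ℂ (x - (P 0 0 x + P 0 1 y)) (u : H) : ℂ)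
      + (inner ℂ (y - (P 1 0 x + P 1 1 y)) (T u) : ℂ) = 0)

/-- N-measurability of a family of densely defined closed operators: the entries of the
characteristic matrices form weakly measurable families of bounded operators. -/
def NMeas (T : ℝ → (H →ₗ.[ℂ] H)) : Prop :=
  ∃ P : ℝ → Fin 2 → Fin 2 → (H →L[ℂ] H),
    (∀ t, IsCharMatrix (T t) (P t)) ∧ ∀ j k : Fin 2, WeakMeasOp (fun t => P t j k)

/-- `R = (T - z I)⁻¹ ∈ B(H)`, i.e. `z` lies in the resolvent set of `T` with resolvent `R`. -/
def IsResolvent (T : H →ₗ.[ℂ] H) (z : ℂ) (R : H →L[ℂ] H) : Prop :=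
  (∀ x : H, ∃ hx : R x ∈ T.domain, T ⟨R x, hx⟩ - z • R x = x) ∧
  (∀ y : T.domain, R (T y - z • (y : H)) = (y : H))

/-- `B = (T⋆ T + I)⁻¹ ∈ B(H)`. -/
def IsInvTstarTAddI [CompleteSpace H] (T : H →ₗ.[ℂ] H) (B : H →L[ℂ] H) : Prop :=
  ∀ x : H, ∃ (h1 : B x ∈ T.domain) (h2 : T ⟨B x, h1⟩ ∈ T.adjoint.domain),
    T.adjoint ⟨T ⟨B x, h1⟩, h2⟩ + B x = x

/-- `C = T B`. -/
def IsTComp (T : H →ₗ.[ℂ] H) (B C : H →L[ℂ] H) : Prop :=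
  ∀ x : H, ∃ h1 : B x ∈ T.domain, T ⟨B x, h1⟩ = C x

/-- `D = (T T⋆ + I)⁻¹ ∈ B(H)`. -/
def IsInvTTstarAddI [CompleteSpace H] (T : H →ₗ.[ℂ] H) (D : H →L[ℂ] H) : Prop :=
  ∀ x : H, ∃ (h1 : D x ∈ T.adjoint.domain) (h2 : T.adjoint ⟨D x, h1⟩ ∈ T.domain),
    T ⟨T.adjoint ⟨D x, h1⟩, h2⟩ + D x = x

/-- `T` is a symmetric operator. -/
def IsSymmPMap (T : H →ₗ.[ℂ] H) : Prop :=
  ∀ x y : T.domain, (inner ℂ (x : H) (T y) : ℂ) = inner ℂ (T x) (y : H)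

/-- `T` is an unbounded operator. -/
def UnboundedPMap (T : H →ₗ.[ℂ] H) : Prop :=
  ¬ ∃ C : ℝ, ∀ x : T.domain, ‖T x‖ ≤ C * ‖(x : H)‖

/-! For `f ∈ 𝒟` the family `t ↦ T(t) f(t)` is weakly measurable, hence strongly measurable by a
Pettis-type argument in the separable space `H`: it is the pointwise limit of its orthogonal
projections onto an increasing sequence of finite-dimensional subspaces with dense union, and each
projection is a finite sum of scalar measurable functions times fixed vectors. Truncating `f` to
the sets where `‖T(t) f(t)‖ ≤ n ‖f(t)‖`, which exhaust `ℝ` up to a null set, gives elements of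
`dom 𝒯` converging to `f` in `L²`, so the dense set `𝒟` lies in the closure of `dom 𝒯`. -/

open Filter Topology
open scoped ENNReal

theorem Submodule.exists_monotone_finiteDimensional_dense_iSup (𝕜 E : Type*) [RCLike 𝕜]
    [NormedAddCommGroup E] [InnerProductSpace 𝕜 E] [TopologicalSpace.SeparableSpace E] :
    ∃ U : ℕ → Submodule 𝕜 E, (∀ n, FiniteDimensional 𝕜 (U n)) ∧ Monotone U ∧
      ⊤ ≤ (⨆ n, U n).topologicalClosure := by
  set d := TopologicalSpace.denseSeq E
  refine ⟨fun n => span 𝕜 (d '' Set.Iic n),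
    fun n => FiniteDimensional.span_of_finite 𝕜 ((Set.finite_Iic n).image d),
    fun m n hmn => span_mono (Set.image_mono (Set.Iic_subset_Iic.mpr hmn)), ?_⟩
  have hrange : Set.range d ⊆ (⨆ n, span 𝕜 (d '' Set.Iic n) : Submodule 𝕜 E) := by
    rintro _ ⟨k, rfl⟩
    exact mem_iSup_of_mem k (subset_span (Set.mem_image_of_mem d (Set.mem_Iic.mpr le_rfl)))
  intro x _
  rw [← SetLike.mem_coe, topologicalClosure_coe]
  exact closure_mono hrange (TopologicalSpace.denseRange_denseSeq E x)

theorem MeasureTheory.aestronglyMeasurable_of_forall_aemeasurable_inner {𝕜 E α : Type*}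
    [RCLike 𝕜] [NormedAddCommGroup E] [InnerProductSpace 𝕜 E] [TopologicalSpace.SeparableSpace E]
    [MeasurableSpace α] {μ : Measure α} {g : α → E}
    (hg : ∀ h : E, AEMeasurable (fun x => (inner 𝕜 h (g x) : 𝕜)) μ) :
    AEStronglyMeasurable g μ := by
  obtain ⟨U, hUfin, hU, hUdense⟩ := Submodule.exists_monotone_finiteDimensional_dense_iSup 𝕜 E
  refine aestronglyMeasurable_of_tendsto_ae atTop (f := fun n x => (U n).starProjection (g x))
    (fun n => ?_) (ae_of_all _ fun x => Submodule.starProjection_tendsto_self U hU (g x) hUdense)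
  let b := stdOrthonormalBasis 𝕜 (U n)
  have hsum : (fun x => (U n).starProjection (g x)) =
      fun x => ∑ i, (inner 𝕜 (b i : E) (g x) : 𝕜) • (b i : E) := by
    ext1 x
    simp [Submodule.starProjection_apply, b.orthogonalProjectionOnto_apply_eq_sum]
  rw [hsum]
  exact Finset.aestronglyMeasurable_fun_sum _ fun i _ =>
    (hg (b i)).aestronglyMeasurable.smul_const _

theorem MeasureTheory.AECover.tendsto_setLIntegral_compl {α : Type*} [MeasurableSpace α]
    {μ : Measure α} {S : ℕ → Set α} (hS : AECover μ atTop S) {F : α → ℝ≥0∞}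
    (hF : AEMeasurable F μ) (hF_fin : ∫⁻ x, F x ∂μ ≠ ∞) :
    Tendsto (fun n => ∫⁻ x in (S n)ᶜ, F x ∂μ) atTop (𝓝 0) := by
  have hcompl : ∀ n, ∫⁻ x in (S n)ᶜ, F x ∂μ = ∫⁻ x, F x ∂μ - ∫⁻ x in S n, F x ∂μ := fun n =>
    ENNReal.eq_sub_of_add_eq (ne_top_of_le_ne_top hF_fin (setLIntegral_le_lintegral _ _))
      (by rw [add_comm]; exact lintegral_add_compl F (hS.measurableSet n))
  simp_rw [hcompl]
  simpa using ENNReal.Tendsto.sub tendsto_const_nhds (hS.lintegral_tendsto_of_nat hF)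
    (Or.inl hF_fin)

theorem MeasureTheory.MemLp.tendsto_eLpNorm_indicator_compl {α E : Type*} [MeasurableSpace α]
    {μ : Measure α} [NormedAddCommGroup E] {p : ℝ≥0∞} {f : α → E} (hf : MemLp f p μ)
    (hp : p ≠ ∞) {S : ℕ → Set α} (hS : AECover μ atTop S) :
    Tendsto (fun n => eLpNorm ((S n)ᶜ.indicator f) p μ) atTop (𝓝 0) := by
  rcases eq_or_ne p 0 with rfl | hp0
  · simp
  simp_rw [eLpNorm_indicator_eq_eLpNorm_restrict (hS.measurableSet _).compl,
    eLpNorm_eq_lintegral_rpow_enorm_toReal hp0 hp]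
  have hlim := hS.tendsto_setLIntegral_compl (hf.aestronglyMeasurable.enorm.pow_const p.toReal)
    (lintegral_rpow_enorm_lt_top_of_eLpNorm_lt_top hp0 hp hf.eLpNorm_lt_top).ne
  have hcont := (ENNReal.continuous_rpow_const (y := 1 / p.toReal)).tendsto 0
  rw [ENNReal.zero_rpow_of_pos (one_div_pos.mpr (ENNReal.toReal_pos hp0 hp))] at hcont
  exact hcont.comp hlim

theorem MeasureTheory.Lp.tendsto_indicator_toLp {α E : Type*} [MeasurableSpace α]
    {μ : Measure α} [NormedAddCommGroup E] {p : ℝ≥0∞} [Fact (1 ≤ p)] (hp : p ≠ ∞)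
    (f : Lp E p μ) {S : ℕ → Set α} (hS : AECover μ atTop S) :
    Tendsto (fun n => ((Lp.memLp f).indicator (hS.measurableSet n)).toLp _) atTop (𝓝 f) := by
  conv_rhs => rw [← Lp.toLp_coeFn f (Lp.memLp f)]
  rw [Lp.tendsto_Lp_iff_tendsto_eLpNorm'']
  simpa [← Set.indicator_compl, eLpNorm_sub_comm] using
    (Lp.memLp f).tendsto_eLpNorm_indicator_compl hp hS

theorem MeasureTheory.aecover_norm_le_nat_mul_norm {α E F : Type*} [MeasurableSpace α]
    {μ : Measure α} [NormedAddCommGroup E] [NormedAddCommGroup F] {f : α → E} {φ : α → F}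
    (hf : StronglyMeasurable f) (hφ : StronglyMeasurable φ)
    (hzero : ∀ᵐ x ∂μ, f x = 0 → φ x = 0) :
    AECover μ atTop (fun n : ℕ => {x | ‖φ x‖ ≤ n * ‖f x‖}) where
  ae_eventually_mem := by
    filter_upwards [hzero] with x hx
    rcases eq_or_ne (f x) 0 with h0 | h0
    · simp [h0, hx h0]
    obtain ⟨N, hN⟩ := exists_nat_ge (‖φ x‖ / ‖f x‖)
    filter_upwards [eventually_ge_atTop N] with n hn
    calc ‖φ x‖ ≤ N * ‖f x‖ := (div_le_iff₀ (norm_pos_iff.mpr h0)).mp hN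
      _ ≤ n * ‖f x‖ := by gcongr
  measurableSet _ := measurableSet_le hφ.norm.measurable (measurable_const.mul hf.norm.measurable)

theorem LinearPMap.exists_apply_indicator_eq {α 𝕜 E F : Type*} [Ring 𝕜] [AddCommGroup E]
    [Module 𝕜 E] [AddCommGroup F] [Module 𝕜 F] {T : α → E →ₗ.[𝕜] F} {x : α → E} {y : α → F}
    {a : α} (s : Set α) (h : ∃ hx : x a ∈ (T a).domain, T a ⟨x a, hx⟩ = y a) :
    ∃ hx : s.indicator x a ∈ (T a).domain, T a ⟨s.indicator x a, hx⟩ = s.indicator y a := by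
  by_cases ha : a ∈ s
  · simpa only [Set.indicator_of_mem ha] using h
  · simp only [Set.indicator_of_notMem ha]
    exact ⟨zero_mem _, map_zero (T a)⟩

theorem MeasureTheory.Lp.mem_closure_domain_of_ae_apply_eq {α 𝕜 E F : Type*} [MeasurableSpace α]
    {μ : Measure α} [NormedField 𝕜] [NormedAddCommGroup E] [NormedSpace 𝕜 E]
    [NormedAddCommGroup F] [NormedSpace 𝕜 F] {p : ℝ≥0∞} [Fact (1 ≤ p)] (hp : p ≠ ∞)
    {T : α → E →ₗ.[𝕜] F} {𝒯 : Lp E p μ →ₗ.[𝕜] Lp F p μ}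
    (h𝒯 : ∀ (f : Lp E p μ) (g : Lp F p μ),
      (∀ᵐ t ∂μ, ∃ hft : f t ∈ (T t).domain, T t ⟨f t, hft⟩ = g t) → (f, g) ∈ 𝒯.graph)
    {f : Lp E p μ} {φ : α → F} (hφ : StronglyMeasurable φ)
    (hfφ : ∀ᵐ t ∂μ, ∃ hft : f t ∈ (T t).domain, T t ⟨f t, hft⟩ = φ t) :
    f ∈ closure (𝒯.domain : Set (Lp E p μ)) := by
  have hzero : ∀ᵐ t ∂μ, f t = 0 → φ t = 0 := by
    filter_upwards [hfφ] with t ⟨hft, hTf⟩ h0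
    rw [← hTf, show (⟨f t, hft⟩ : (T t).domain) = 0 from Subtype.ext h0, (T t).map_zero]
  have hS := aecover_norm_le_nat_mul_norm (Lp.stronglyMeasurable f) hφ hzero
  set S : ℕ → Set α := fun n => {t | ‖φ t‖ ≤ n * ‖f t‖}
  refine mem_closure_of_tendsto (Lp.tendsto_indicator_toLp hp f hS) (Eventually.of_forall ?_)
  intro n
  have hfn : MemLp ((S n).indicator f) p μ := (Lp.memLp f).indicator (hS.measurableSet n)
  have hφn : MemLp ((S n).indicator φ) p μ := by
    refine (Lp.memLp f).of_le_mul (c := n) (hφ.aestronglyMeasurable.indicator (hS.measurableSet n))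
      (ae_of_all _ fun t => ?_)
    rw [norm_indicator_eq_indicator_norm]
    exact Set.indicator_apply_le' id fun _ => by positivity
  refine LinearPMap.mem_domain_of_mem_graph (h𝒯 (hfn.toLp _) (hφn.toLp _) ?_)
  filter_upwards [hfφ, hfn.coeFn_toLp, hφn.coeFn_toLp] with t ht hf_ind hφ_ind
  rw [hf_ind, hφ_ind]
  exact LinearPMap.exists_apply_indicator_eq _ ht

theorem WeakMeasFam.exists_stronglyMeasurable_ae_apply_eq
    [TopologicalSpace.SeparableSpace H] {T : ℝ → H →ₗ.[ℂ] H} (hT : WeakMeasFam T) {f : ℝ → H}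
    (hf : WeakMeasVec f) (hdom : ∀ᵐ t ∂(volume : Measure ℝ), f t ∈ (T t).domain) :
    ∃ φ : ℝ → H, StronglyMeasurable φ ∧
      ∀ᵐ t ∂(volume : Measure ℝ), ∃ hft : f t ∈ (T t).domain, T t ⟨f t, hft⟩ = φ t := by
  classical
  let fd : (t : ℝ) → (T t).domain := fun t => if h : f t ∈ (T t).domain then ⟨f t, h⟩ else 0
  have hfd : ∀ᵐ t ∂(volume : Measure ℝ), (fd t : H) = f t := by
    filter_upwards [hdom] with t ht
    simp [fd, ht]
  have hw : WeakMeasVec (fun t => (fd t : H)) := fun h =>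
    (hf h).congr (by filter_upwards [hfd] with t ht; rw [ht])
  obtain ⟨φ, hφ, hφeq⟩ := aestronglyMeasurable_of_forall_aemeasurable_inner (hT fd hw)
  refine ⟨φ, hφ, ?_⟩
  filter_upwards [hdom, hφeq] with t ht hφt
  exact ⟨ht, by simpa [fd, ht] using hφt⟩

theorem stmt_15_general {H : Type*} [NormedAddCommGroup H] [InnerProductSpace ℂ H]
    [TopologicalSpace.SeparableSpace H]
    (T : ℝ → (H →ₗ.[ℂ] H))
    (hmeas : WeakMeasFam T)
    (𝒯 : Lp H 2 (volume : Measure ℝ) →ₗ.[ℂ] Lp H 2 (volume : Measure ℝ))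
    (h𝒯 : ∀ f g : Lp H 2 (volume : Measure ℝ),
      ((f, g) ∈ 𝒯.graph ↔
        ∀ᵐ t ∂(volume : Measure ℝ),
          ∃ hft : f t ∈ (T t).domain, T t ⟨f t, hft⟩ = g t))
    (hD : Dense {f : Lp H 2 (volume : Measure ℝ) |
        ∀ᵐ t ∂(volume : Measure ℝ), f t ∈ (T t).domain}) :
    Dense (𝒯.domain : Set (Lp H 2 (volume : Measure ℝ))) := by
  refine dense_closure.mp (hD.mono fun f hf => ?_)
  have hf_weak : WeakMeasVec (fun t => f t) := fun h =>
    (aestronglyMeasurable_const.inner (Lp.aestronglyMeasurable f)).aemeasurable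
  obtain ⟨φ, hφ, hfφ⟩ := hmeas.exists_stronglyMeasurable_ae_apply_eq hf_weak hf
  exact Lp.mem_closure_domain_of_ae_apply_eq ENNReal.ofNat_ne_top
    (fun f g => (h𝒯 f g).mpr) hφ hfφ

/-- For a weakly measurable family of densely defined closed operators with
maximal operator `𝒯` in `L²(ℝ; H)`: if `𝒟 = {f ∈ L²(ℝ; H) : f t ∈ dom (T t) a.e.}` is dense,
then `𝒯` is densely defined. -/
theorem stmt_15 {H : Type*} [NormedAddCommGroup H] [InnerProductSpace ℂ H]
    [CompleteSpace H] [TopologicalSpace.SeparableSpace H]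
    (T : ℝ → (H →ₗ.[ℂ] H))
    (hdense : ∀ t, Dense ((T t).domain : Set H)) (hclosed : ∀ t, (T t).IsClosed)
    (hmeas : WeakMeasFam T)
    (𝒯 : Lp H 2 (volume : Measure ℝ) →ₗ.[ℂ] Lp H 2 (volume : Measure ℝ))
    (h𝒯 : ∀ f g : Lp H 2 (volume : Measure ℝ),
      ((f, g) ∈ 𝒯.graph ↔
        ∀ᵐ t ∂(volume : Measure ℝ),
          ∃ hft : f t ∈ (T t).domain, T t ⟨f t, hft⟩ = g t))
    (hD : Dense {f : Lp H 2 (volume : Measure ℝ) |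
        ∀ᵐ t ∂(volume : Measure ℝ), f t ∈ (T t).domain}) :
    Dense (𝒯.domain : Set (Lp H 2 (volume : Measure ℝ))) :=
  stmt_15_general T hmeas 𝒯 h𝒯 hD

end
end

section
/- Let H be a separable complex Hilbert space, let T₀ be a densely defined closed symmetric operator in H, and let T₁ and T₂ be two distinct self-adjoint extensions of T₀ (T₀ ⊆ T_j = T_j*, j = 1, 2, and T₁ ≠ T₂). Let 𝔈 ⊆ ℝ be a set that is not Lebesgue measurable, and define T̃(t) = T₁ for t ∈ 𝔈 and T̃(t) = T₂ for t ∈ ℝ∖𝔈. Then the family {T̃(t)}_{t∈ℝ} of self-adjoint operators is weakly measurable but not N-measurable. -/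
open MeasureTheory

noncomputable section

variable {H : Type*} [NormedAddCommGroup H] [InnerProductSpace ℂ H]

/-
Both operators extend the densely defined `T₀` and are self-adjoint, so
`⟪e, T(t) f(t)⟫ = ⟪T₀ e, f(t)⟫` for `e ∈ dom T₀`; approximating an arbitrary `h` by such `e` makes
`t ↦ ⟪h, T(t) f(t)⟫` a pointwise limit of measurable functions. On the other hand the
characteristic matrix determines the operator and is determined by it, so the characteristic
matrices of `T₁ ≠ T₂` differ in some matrix coefficient `⟪h, P_{jk} x⟫`; along the family this
coefficient takes one value exactly on `𝔈`, which therefore would be Lebesgue measurable.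
-/

lemma nullMeasurableSet_of_aemeasurable_ite {α β : Type*} [MeasurableSpace α] [MeasurableSpace β]
    [MeasurableSingletonClass β] {μ : Measure α} {s : Set α} [DecidablePred (· ∈ s)] {a b : β}
    (hab : a ≠ b) (h : AEMeasurable (fun x => if x ∈ s then a else b) μ) :
    NullMeasurableSet s μ := by
  have hs : s = (fun x => if x ∈ s then a else b) ⁻¹' {a} := by
    ext x
    by_cases hx : x ∈ s <;> simp [hx, hab.symm]
  rw [hs]
  exact h.nullMeasurable (measurableSet_singleton a)

lemma IsSelfAdjoint.isFormalAdjoint_of_le {E : Type*} [NormedAddCommGroup E]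
    [InnerProductSpace ℂ E] [CompleteSpace E] {A T : E →ₗ.[ℂ] E} (hA : IsSelfAdjoint A)
    (hTA : T ≤ A) : T.IsFormalAdjoint A := by
  intro x y
  have hAA : A.IsFormalAdjoint A := by
    simpa only [LinearPMap.isSelfAdjoint_def.1 hA] using
      LinearPMap.adjoint_isFormalAdjoint hA.dense_domain
  rw [hTA.2 (y := ⟨x, hTA.1 x.2⟩) rfl]
  exact hAA _ y

lemma weakMeasFam_of_isFormalAdjoint {T₀ : H →ₗ.[ℂ] H} {T : ℝ → H →ₗ.[ℂ] H}
    (hd : Dense (T₀.domain : Set H)) (hT : ∀ t, T₀.IsFormalAdjoint (T t)) : WeakMeasFam T := by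
  intro f hf h
  obtain ⟨u, hu, hlim⟩ := mem_closure_iff_seq_limit.1 (hd h)
  refine aemeasurable_of_tendsto_metrizable_ae Filter.atTop
    (f := fun n t => (inner ℂ (u n) (T t (f t)) : ℂ)) (fun n => ?_)
    (ae_of_all _ fun t => hlim.inner tendsto_const_nhds)
  have hcoeff : (fun t => (inner ℂ (u n) (T t (f t)) : ℂ))
      = fun t => (inner ℂ (T₀ ⟨u n, hu n⟩) (f t : H) : ℂ) :=
    funext fun t => (hT t ⟨u n, hu n⟩ (f t)).symm
  rw [hcoeff]
  exact hf _

lemma inner_self_add_inner_self_eq_zero {a b : H}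
    (h : (inner ℂ a a : ℂ) + inner ℂ b b = 0) : a = 0 ∧ b = 0 := by
  have hre := congrArg RCLike.re h
  rw [map_add, map_zero] at hre
  have ha := inner_self_nonneg (𝕜 := ℂ) (x := a)
  have hb := inner_self_nonneg (𝕜 := ℂ) (x := b)
  exact ⟨re_inner_self_nonpos.1 (by linarith), re_inner_self_nonpos.1 (by linarith)⟩

namespace IsCharMatrix

variable {T S : H →ₗ.[ℂ] H} {P Q : Fin 2 → Fin 2 → (H →L[ℂ] H)}

lemma apply_eq_of_mem_graph (hP : IsCharMatrix T P) {x y a b : H} (hab : (a, b) ∈ T.graph)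
    (horth : ∀ u : T.domain,
      (inner ℂ (x - a) (u : H) : ℂ) + (inner ℂ (y - b) (T u) : ℂ) = 0) :
    P 0 0 x + P 0 1 y = a ∧ P 1 0 x + P 1 1 y = b := by
  obtain ⟨u, hu₁, hu₂⟩ := (LinearPMap.mem_graph_iff T).1 (T.graph.sub_mem (hP.1 x y) hab)
  have hu : (inner ℂ (u : H) (u : H) : ℂ) + inner ℂ (T u) (T u) = 0 :=
    calc (inner ℂ (u : H) (u : H) : ℂ) + inner ℂ (T u) (T u)
        = inner ℂ (x - a - (x - (P 0 0 x + P 0 1 y))) (u : H)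
            + inner ℂ (y - b - (y - (P 1 0 x + P 1 1 y))) (T u) := by
          rw [sub_sub_sub_cancel_left, sub_sub_sub_cancel_left]
          exact congrArg₂ _ (congrArg₂ _ hu₁ rfl) (congrArg₂ _ hu₂ rfl)
      _ = (inner ℂ (x - a) (u : H) + inner ℂ (y - b) (T u))
            - (inner ℂ (x - (P 0 0 x + P 0 1 y)) (u : H)
              + inner ℂ (y - (P 1 0 x + P 1 1 y)) (T u)) := by
          simp only [inner_sub_left]
          ring
      _ = 0 := by rw [horth u, hP.2 x y u, sub_zero]
  obtain ⟨hu0, hTu0⟩ := inner_self_add_inner_self_eq_zero hu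
  rw [hu0] at hu₁
  rw [hTu0] at hu₂
  exact ⟨sub_eq_zero.1 hu₁.symm, sub_eq_zero.1 hu₂.symm⟩

lemma apply_of_mem_graph (hP : IsCharMatrix T P) {x y : H} (hxy : (x, y) ∈ T.graph) :
    P 0 0 x + P 0 1 y = x ∧ P 1 0 x + P 1 1 y = y :=
  hP.apply_eq_of_mem_graph hxy fun u => by simp

lemma unique (hP : IsCharMatrix T P) (hQ : IsCharMatrix T Q) : P = Q := by
  have hPQ (x y : H) := hP.apply_eq_of_mem_graph (hQ.1 x y) (hQ.2 x y)
  funext j k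
  ext x
  have hx0 := hPQ x 0
  have h0x := hPQ 0 x
  simp only [map_zero, add_zero, zero_add] at hx0 h0x
  fin_cases j <;> fin_cases k
  exacts [hx0.1, h0x.1, hx0.2, h0x.2]

lemma graph_le (hT : IsCharMatrix T P) (hS : IsCharMatrix S P) : T.graph ≤ S.graph := by
  rintro ⟨x, y⟩ hxy
  obtain ⟨hx, hy⟩ := hT.apply_of_mem_graph hxy
  simpa only [hx, hy] using hS.1 x y

lemma eq (hT : IsCharMatrix T P) (hS : IsCharMatrix S P) : T = S :=
  LinearPMap.eq_of_eq_graph (le_antisymm (hT.graph_le hS) (hS.graph_le hT))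

end IsCharMatrix

lemma not_nMeas_ite {T₁ T₂ : H →ₗ.[ℂ] H} (hne : T₁ ≠ T₂) {s : Set ℝ} [DecidablePred (· ∈ s)]
    (hs : ¬ NullMeasurableSet s (volume : Measure ℝ)) :
    ¬ NMeas (fun t => if t ∈ s then T₁ else T₂) := by
  rintro ⟨P, hP, hmeas⟩
  obtain ⟨t₁, ht₁⟩ : s.Nonempty :=
    Set.nonempty_iff_ne_empty.2 fun h => hs (h ▸ nullMeasurableSet_empty)
  obtain ⟨t₂, ht₂⟩ : sᶜ.Nonempty :=
    Set.nonempty_iff_ne_empty.2 fun h => hs (Set.compl_empty_iff.1 h ▸ nullMeasurableSet_univ)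
  have hP₁ : IsCharMatrix T₁ (P t₁) := by simpa [ht₁] using hP t₁
  have hP₂ : IsCharMatrix T₂ (P t₂) := by simpa [Set.notMem_of_mem_compl ht₂] using hP t₂
  have hP_ite (t : ℝ) : P t = if t ∈ s then P t₁ else P t₂ := by
    have hPt : IsCharMatrix (if t ∈ s then T₁ else T₂) (P t) := hP t
    split_ifs at hPt ⊢
    exacts [hPt.unique hP₁, hPt.unique hP₂]
  have hP₁₂ : P t₁ ≠ P t₂ := fun h => hne (hP₁.eq (h ▸ hP₂))
  obtain ⟨j, k, x, h, hcoeff⟩ :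
      ∃ j k x h, (inner ℂ h (P t₁ j k x) : ℂ) ≠ inner ℂ h (P t₂ j k x) := by
    by_contra! hc
    exact hP₁₂ (funext₂ fun j k => ContinuousLinearMap.ext fun x => ext_inner_left ℂ (hc j k x))
  refine hs (nullMeasurableSet_of_aemeasurable_ite hcoeff ?_)
  convert hmeas j k h x using 2 with t
  beta_reduce
  rw [hP_ite t]
  split_ifs <;> rfl

open scoped Classical in
theorem stmt_16_general {H : Type*} [NormedAddCommGroup H] [InnerProductSpace ℂ H]
    [CompleteSpace H]
    (T₀ T₁ T₂ : H →ₗ.[ℂ] H)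
    (hd₀ : Dense (T₀.domain : Set H))
    (hext₁ : T₀ ≤ T₁) (hsa₁ : IsSelfAdjoint T₁)
    (hext₂ : T₀ ≤ T₂) (hsa₂ : IsSelfAdjoint T₂)
    (hne : T₁ ≠ T₂)
    (𝔈 : Set ℝ) (h𝔈 : ¬ NullMeasurableSet 𝔈 (volume : Measure ℝ)) :
    WeakMeasFam (fun t => if t ∈ 𝔈 then T₁ else T₂) ∧
      ¬ NMeas (fun t => if t ∈ 𝔈 then T₁ else T₂) := by
  refine ⟨weakMeasFam_of_isFormalAdjoint hd₀ fun t => ?_, not_nMeas_ite hne h𝔈⟩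
  split_ifs
  · exact hsa₁.isFormalAdjoint_of_le hext₁
  · exact hsa₂.isFormalAdjoint_of_le hext₂

open scoped Classical in
/-- For two distinct self-adjoint extensions `T₁ ≠ T₂` of a densely defined
closed symmetric operator `T₀` and a non-Lebesgue-measurable set `𝔈 ⊆ ℝ`, the self-adjoint
family equal to `T₁` on `𝔈` and `T₂` off `𝔈` is weakly measurable but not N-measurable. -/
theorem stmt_16 {H : Type*} [NormedAddCommGroup H] [InnerProductSpace ℂ H]
    [CompleteSpace H] [TopologicalSpace.SeparableSpace H]
    (T₀ T₁ T₂ : H →ₗ.[ℂ] H)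
    (hd₀ : Dense (T₀.domain : Set H)) (hc₀ : T₀.IsClosed) (hs₀ : IsSymmPMap T₀)
    (hext₁ : T₀ ≤ T₁) (hsa₁ : IsSelfAdjoint T₁)
    (hext₂ : T₀ ≤ T₂) (hsa₂ : IsSelfAdjoint T₂)
    (hne : T₁ ≠ T₂)
    (𝔈 : Set ℝ) (h𝔈 : ¬ NullMeasurableSet 𝔈 (volume : Measure ℝ)) :
    WeakMeasFam (fun t => if t ∈ 𝔈 then T₁ else T₂) ∧
      ¬ NMeas (fun t => if t ∈ 𝔈 then T₁ else T₂) :=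
  stmt_16_general T₀ T₁ T₂ hd₀ hext₁ hsa₁ hext₂ hsa₂ hne 𝔈 h𝔈
end
end
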